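/- arXiv:1305.1591 — 2 statements merged into one kernel-verified Lean document; each statement's English description precedes it below -/
import Mathlib

section
/- Let X : ℕ → ℝ be a bounded function and let x be a real number with |x| < 1. Then the infinite product ∏_{n=1}^∞ (1 − xⁿ)^{X(n)} (real-power exponents, all bases positive) converges, and ∏_{n=1}^∞ (1 − xⁿ)^{X(n)} = exp(−∑_{n=1}^∞ (xⁿ/n)·∑_{d | n} d·X(d)). In particular, if f is the function defined on (−1,1) by f(x) = ∑_{n=1}^∞ (xⁿ/n)·∑_{d|n} d·X(d), then e^{−f(x)} = ∏_{n=1}^∞ (1 − xⁿ)^{X(n)}. -/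
/-!
Expand every logarithm: `a d * log (1 - x ^ d) = -∑_{m ≥ 1} a d * x ^ (d * m) / m`. For bounded `a`
and `|x| < 1` the double series over `(d, m)` converges absolutely, so it may be summed in any
order. Summing over `m` first gives `-∑ a d * log (1 - x ^ d)`, the logarithm of the product;
grouping the terms with `d * m = n` gives `x ^ n / n * ∑_{d ∣ n} d * a d`, since `1 / m = d / n`.
-/

open Real

noncomputable def lambertLogTerm (a : ℕ → ℝ) (x : ℝ) (p : ℕ+ × ℕ+) : ℝ :=
  a p.1 * x ^ (p.1 * p.2 : ℕ) / p.2

section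
variable {a : ℕ → ℝ} {C x : ℝ}

theorem abs_pow_lt_one (hx : |x| < 1) {n : ℕ} (hn : n ≠ 0) : |x ^ n| < 1 := by
  rw [abs_pow]
  exact pow_lt_one₀ (abs_nonneg x) hx hn

theorem summable_lambertLogTerm (ha : ∀ n, |a n| ≤ C) (hx : |x| < 1) :
    Summable (lambertLogTerm a x) := by
  have hgeo : Summable fun p : ℕ+ × ℕ+ => C * |x| ^ (p.1 * p.2 : ℕ) := by
    simpa using (summable_prod_mul_pow 0 (r := |x|) (by simpa using hx)).mul_left C
  refine hgeo.of_norm_bounded fun p => ?_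
  have hp : (1 : ℝ) ≤ (p.2 : ℕ) := by exact_mod_cast p.2.pos
  rw [lambertLogTerm, Real.norm_eq_abs, abs_div, abs_mul, abs_pow, Nat.abs_cast]
  calc |a p.1| * |x| ^ (p.1 * p.2 : ℕ) / (p.2 : ℕ)
      ≤ |a p.1| * |x| ^ (p.1 * p.2 : ℕ) := div_le_self (by positivity) hp
    _ ≤ C * |x| ^ (p.1 * p.2 : ℕ) := by gcongr; exact ha _

theorem hasSum_pnat_pow_div (hx : |x| < 1) :
    HasSum (fun m : ℕ+ => x ^ (m : ℕ) / (m : ℕ)) (-log (1 - x)) :=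
  (hasSum_pnat_iff_hasSum_succ (f := fun n : ℕ => x ^ n / n)).2 (by
    simpa only [Nat.cast_add, Nat.cast_one] using hasSum_pow_div_log_of_abs_lt_one hx)

theorem sum_divisorsAntidiagonal_mul_pow_div {n : ℕ} (hn : n ≠ 0) :
    ∑ p ∈ n.divisorsAntidiagonal, a p.1 * x ^ (p.1 * p.2) / p.2 =
      x ^ n / n * ∑ d ∈ n.divisors, d * a d := by
  rw [Nat.sum_divisorsAntidiagonal (fun i j => a i * x ^ (i * j) / j), Finset.mul_sum]
  refine Finset.sum_congr rfl fun d hd => ?_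
  have hdn : d ∣ n := Nat.dvd_of_mem_divisors hd
  have hd0 : (d : ℝ) ≠ 0 := by exact_mod_cast Nat.ne_of_gt (Nat.pos_of_mem_divisors hd)
  have hn0 : (n : ℝ) ≠ 0 := by exact_mod_cast hn
  rw [Nat.mul_div_cancel' hdn, Nat.cast_div hdn hd0]
  field_simp

theorem hasSum_pnat_pow_div_mul_sum_divisors (hg : Summable (lambertLogTerm a x)) :
    HasSum (fun n : ℕ+ => x ^ (n : ℕ) / (n : ℕ) * ∑ d ∈ (n : ℕ).divisors, d * a d)
      (∑' p, lambertLogTerm a x p) := by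
  refine (sigmaAntidiagonalEquivProd.hasSum_iff.2 hg.hasSum).sigma fun n => ?_
  rw [← sum_divisorsAntidiagonal_mul_pow_div n.ne_zero, ← Finset.sum_attach]
  exact hasSum_fintype _

theorem hasSum_pnat_mul_log_one_sub_pow (hx : |x| < 1) (hg : Summable (lambertLogTerm a x)) :
    HasSum (fun n : ℕ+ => a n * log (1 - x ^ (n : ℕ))) (-∑' p, lambertLogTerm a x p) := by
  have := hg.hasSum.prod_fiberwise fun n => by
    simpa only [lambertLogTerm, pow_mul, mul_div_assoc] using
      (hasSum_pnat_pow_div (abs_pow_lt_one hx n.ne_zero)).mul_left (a n)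
  simpa only [mul_neg, neg_neg] using this.neg

theorem hasProd_one_sub_pow_rpow (ha : ∀ n, |a n| ≤ C) (hx : |x| < 1) :
    HasProd (fun n : ℕ => (1 - x ^ (n + 1)) ^ a (n + 1))
      (exp (-∑' n : ℕ, x ^ (n + 1) / (n + 1 : ℝ) * ∑ d ∈ (n + 1).divisors, (d : ℝ) * a d)) := by
  have hg := summable_lambertLogTerm ha hx
  have hlog := (hasSum_pnat_iff_hasSum_succ (f := fun n => a n * log (1 - x ^ n))).1
    (hasSum_pnat_mul_log_one_sub_pow hx hg)
  have hdiv := (hasSum_pnat_iff_hasSum_succ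
    (f := fun n => x ^ n / n * ∑ d ∈ n.divisors, (d : ℝ) * a d)).1
    (hasSum_pnat_pow_div_mul_sum_divisors hg)
  push_cast at hdiv
  rw [hdiv.tsum_eq]
  convert hlog.rexp using 1
  funext n
  have hpos : 0 < 1 - x ^ (n + 1) :=
    sub_pos.2 ((le_abs_self _).trans_lt (abs_pow_lt_one hx n.succ_ne_zero))
  rw [Function.comp_apply, rpow_def_of_pos hpos, mul_comm]

end

/-- For a bounded `X : ℕ → ℝ` and `|x| < 1`, the infinite product
`∏_{n ≥ 1} (1 - x^n) ^ (X n)` (real-power exponents) converges and equals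
`exp (-∑_{n ≥ 1} (x^n / n) * ∑_{d ∣ n} d * X d)`.  In particular, if
`f y = ∑_{n ≥ 1} (y^n / n) * ∑_{d ∣ n} d * X d` on `(-1, 1)`, then
`exp (-(f x)) = ∏_{n ≥ 1} (1 - x^n) ^ (X n)`. -/
theorem stmt2 (X : ℕ → ℝ) (hX : ∃ C : ℝ, ∀ n : ℕ, |X n| ≤ C)
    (x : ℝ) (hx : |x| < 1) (f : ℝ → ℝ)
    (hf : ∀ y : ℝ, |y| < 1 →
      f y = ∑' n : ℕ, (y ^ (n + 1) / (n + 1 : ℝ)) *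
        ∑ d ∈ (n + 1).divisors, (d : ℝ) * X d) :
    Multipliable (fun n : ℕ => (1 - x ^ (n + 1)) ^ (X (n + 1))) ∧
    ∏' n : ℕ, (1 - x ^ (n + 1)) ^ (X (n + 1)) =
      Real.exp (- ∑' n : ℕ, (x ^ (n + 1) / (n + 1 : ℝ)) *
        ∑ d ∈ (n + 1).divisors, (d : ℝ) * X d) ∧
    Real.exp (-(f x)) = ∏' n : ℕ, (1 - x ^ (n + 1)) ^ (X (n + 1)) := by
  obtain ⟨C, hC⟩ := hX
  have hprod := hasProd_one_sub_pow_rpow hC hx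
  exact ⟨hprod.multipliable, hprod.tprod_eq, by rw [hf x hx, hprod.tprod_eq]⟩
end

section
/- Let χ₅ : ℕ → ℝ be the Legendre symbol modulo 5. Then for every real q with 0 < q < 1, ∏_{n=1}^∞ (1 − qⁿ)^{χ₅(n)} = ( ∑_{n∈ℤ} (−1)ⁿ q^{(5n² + 3n)/2} ) / ( ∑_{n∈ℤ} (−1)ⁿ q^{(5n² + n)/2} ), where the denominator is nonzero, the powers of q with real exponents are real powers, and the product on the left uses real-power exponents of positive bases. -/
/-!
Both theta series are Jacobi triple products in `x = q^(5/2)`: with `y = -q^(c/2)` the identity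
`∑ x^(n²) yⁿ = ∏ (1 - x^(2j+2)) (1 + x^(2j+1) y) (1 + x^(2j+1) / y)` turns `∑ (-1)ⁿ q^((5n²+cn)/2)`
into `(q⁵;q⁵)_∞ (q^((5+c)/2);q⁵)_∞ (q^((5-c)/2);q⁵)_∞`. For `c = 3` and `c = 1` the quotient is
`(q;q⁵)_∞ (q⁴;q⁵)_∞ / ((q²;q⁵)_∞ (q³;q⁵)_∞)`, which is the product on the left grouped by residues
mod 5. The triple product is the limit `N → ∞` of its finite form, Cauchy's `q`-binomial theorem
in `z = x^(1-2N) y`: the Gaussian binomials `[2N, N+n]` in base `x²` tend to `1 / (x²;x²)_∞` and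
are bounded by this limit, so Tannery's theorem applies.
-/

open Finset Filter Topology

noncomputable def chi5 (n : ℕ) : ℝ :=
  if n % 5 = 1 ∨ n % 5 = 4 then 1
  else if n % 5 = 2 ∨ n % 5 = 3 then -1
  else 0

section Algebra

variable {R : Type*}

def gaussBinom [CommSemiring R] (t : R) : ℕ → ℕ → R
  | _, 0 => 1
  | 0, _ + 1 => 0
  | m + 1, k + 1 => gaussBinom t m k + t ^ (k + 1) * gaussBinom t m (k + 1)

def qPochhammer [CommRing R] (t : R) (k : ℕ) : R := ∏ j ∈ range k, (1 - t ^ (j + 1))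

section CommSemiring

variable [CommSemiring R] (t : R)

@[simp] lemma gaussBinom_zero_right (m : ℕ) : gaussBinom t m 0 = 1 := by cases m <;> rfl

lemma gaussBinom_succ_succ (m k : ℕ) :
    gaussBinom t (m + 1) (k + 1) = gaussBinom t m k + t ^ (k + 1) * gaussBinom t m (k + 1) := rfl

lemma gaussBinom_eq_zero_of_lt {m k : ℕ} (h : m < k) : gaussBinom t m k = 0 := by
  induction m generalizing k with
  | zero => obtain ⟨k, rfl⟩ := Nat.exists_eq_add_of_lt h; rfl
  | succ m ih =>
    obtain ⟨k, rfl⟩ := Nat.exists_eq_add_of_le' (Nat.one_le_of_lt h)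
    rw [gaussBinom_succ_succ, ih (by omega), ih (by omega), mul_zero, add_zero]

/-- Cauchy's `q`-binomial theorem. -/
theorem prod_one_add_pow_mul_eq_sum (m : ℕ) (z : R) :
    ∏ j ∈ range m, (1 + t ^ j * z) =
      ∑ k ∈ range (m + 1), gaussBinom t m k * t ^ k.choose 2 * z ^ k := by
  induction m generalizing z with
  | zero => simp
  | succ m ih =>
    have hchoose (k : ℕ) : (k + 1).choose 2 = k.choose 2 + k := by
      simp [Nat.choose_succ_succ, add_comm]
    set S := ∑ k ∈ range (m + 1), gaussBinom t m k * t ^ (k + 1).choose 2 * z ^ k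
    have hL : ∏ j ∈ range (m + 1), (1 + t ^ j * z) = (1 + z) * S := by
      rw [prod_range_succ', mul_comm]
      simp only [pow_succ, mul_assoc, pow_zero, one_mul, ih (t * z)]
      congr 1
      refine sum_congr rfl fun k _ => ?_
      rw [hchoose, pow_add]
      ring
    have hS : S = 1 + ∑ k ∈ range (m + 1),
        t ^ (k + 1) * gaussBinom t m (k + 1) * t ^ (k + 1).choose 2 * z ^ (k + 1) := by
      have hext : S = ∑ k ∈ range (m + 2), gaussBinom t m k * t ^ (k + 1).choose 2 * z ^ k := by
        rw [sum_range_succ, gaussBinom_eq_zero_of_lt t (Nat.lt_succ_self m)]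
        simp [S]
      rw [hext, sum_range_succ', add_comm]
      congr 1
      · simp
      · refine sum_congr rfl fun k _ => ?_
        rw [hchoose (k + 1), pow_add]
        ring
    have hzS : z * S =
        ∑ k ∈ range (m + 1), gaussBinom t m k * t ^ (k + 1).choose 2 * z ^ (k + 1) := by
      rw [mul_sum]
      exact sum_congr rfl fun k _ => by ring
    rw [hL, sum_range_succ', gaussBinom_zero_right]
    simp only [gaussBinom_succ_succ, add_mul, sum_add_distrib]
    rw [one_mul, hzS]
    nth_rewrite 1 [hS]
    simp only [Nat.choose_zero_succ, pow_zero, mul_one]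
    ring

end CommSemiring

lemma gaussBinom_mul_qPochhammer_mul [CommRing R] (t : R) {m k : ℕ} (h : k ≤ m) :
    gaussBinom t m k * qPochhammer t k * qPochhammer t (m - k) = qPochhammer t m := by
  induction m generalizing k with
  | zero =>
    obtain rfl : k = 0 := by omega
    simp [qPochhammer]
  | succ m ih =>
    cases k with
    | zero => simp [qPochhammer]
    | succ k =>
      rw [gaussBinom_succ_succ, Nat.add_sub_add_right]
      rcases Nat.lt_or_eq_of_le (Nat.le_of_succ_le_succ h) with hk | rfl
      · obtain ⟨d, rfl⟩ := Nat.exists_eq_add_of_lt hk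
        have h1 := ih hk.le
        have h2 := ih (Nat.succ_le_of_lt hk)
        rw [show k + d + 1 - k = d + 1 by omega] at h1 ⊢
        rw [show k + d + 1 - (k + 1) = d by omega] at h2
        simp only [qPochhammer, prod_range_succ] at h1 h2 ⊢
        linear_combination (1 - t ^ (k + 1)) * h1 + t ^ (k + 1) * (1 - t ^ (d + 1)) * h2
      · rw [gaussBinom_eq_zero_of_lt t (Nat.lt_succ_self _)]
        have := ih (le_refl k)
        simp only [Nat.sub_self, qPochhammer, prod_range_succ, prod_range_zero] at this ⊢
        linear_combination (1 - t ^ (k + 1)) * this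

end Algebra

section FiniteJacobi

variable {K : Type*} [Field K] {x y : K} (hx : x ≠ 0) (hy : y ≠ 0) (N : ℕ)
include hx hy

lemma prod_range_two_mul_one_add_sq_pow_mul :
    ∏ j ∈ range (2 * N), (1 + (x ^ 2) ^ j * (x ^ (1 - 2 * N : ℤ) * y)) =
      (x ^ N ^ 2)⁻¹ * y ^ N *
        ∏ j ∈ range N, ((1 + x ^ (2 * j + 1) * y) * (1 + x ^ (2 * j + 1) * y⁻¹)) := by
  have hodd : ∑ j ∈ range N, (2 * j + 1) = N ^ 2 := by
    induction N with
    | zero => simp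
    | succ N ih => rw [sum_range_succ, ih]; ring
  have hpow (e : ℕ) :
      (x ^ 2) ^ e * (x ^ (1 - 2 * N : ℤ) * y) = x ^ (2 * e + 1 - 2 * N : ℤ) * y := by
    rw [← mul_assoc, ← pow_mul, ← zpow_natCast, ← zpow_add₀ hx]
    push_cast
    ring_nf
  have hlow (j : ℕ) (hj : j < N) :
      1 + (x ^ 2) ^ (N - 1 - j) * (x ^ (1 - 2 * N : ℤ) * y) =
        (x ^ (2 * j + 1))⁻¹ * y * (1 + x ^ (2 * j + 1) * y⁻¹) := by
    rw [hpow, show (2 * (N - 1 - j : ℕ) + 1 - 2 * N : ℤ) = -(2 * j + 1 : ℕ) by omega, zpow_neg,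
      zpow_natCast]
    field_simp
    ring
  have hhigh (j : ℕ) :
      1 + (x ^ 2) ^ (N + j) * (x ^ (1 - 2 * N : ℤ) * y) = 1 + x ^ (2 * j + 1) * y := by
    rw [hpow, show (2 * (N + j : ℕ) + 1 - 2 * N : ℤ) = (2 * j + 1 : ℕ) by omega, zpow_natCast]
  rw [two_mul, prod_range_add, ← prod_range_reflect,
    prod_congr rfl fun j hj => hlow j (mem_range.1 hj), prod_congr rfl fun j _ => hhigh j,
    prod_mul_distrib, prod_mul_distrib, prod_mul_distrib, prod_inv_distrib, prod_pow_eq_pow_sum,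
    hodd, prod_const, card_range]
  ring

lemma sq_pow_choose_two_mul_zpow_mul_pow (k : ℕ) :
    (x ^ 2) ^ k.choose 2 * (x ^ (1 - 2 * N : ℤ) * y) ^ k =
      (x ^ N ^ 2)⁻¹ * y ^ N * (x ^ (((k : ℤ) - N) ^ 2) * y ^ ((k : ℤ) - N)) := by
  have hchoose : ((k.choose 2 : ℕ) : ℤ) * 2 = k * (k - 1) := by
    have := Nat.cast_choose_two ℚ k
    qify
    rw [this]
    ring
  have hy' : y ^ N * y ^ ((k : ℤ) - N) = y ^ k := by
    rw [← zpow_natCast, ← zpow_add₀ hy, add_sub_cancel, zpow_natCast]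
  rw [mul_pow, ← pow_mul, ← zpow_natCast (x ^ (1 - 2 * N : ℤ)), ← zpow_mul, ← hy',
    ← zpow_natCast x (2 * _), ← zpow_natCast x (N ^ 2), ← zpow_neg, mul_mul_mul_comm,
    ← mul_assoc, ← zpow_add₀ hx, ← zpow_add₀ hx]
  congr 2
  push_cast
  linear_combination hchoose

lemma prod_range_jacobi_eq_sum_gaussBinom :
    ∏ j ∈ range N, ((1 + x ^ (2 * j + 1) * y) * (1 + x ^ (2 * j + 1) * y⁻¹)) =
      ∑ n ∈ Icc (-(N : ℤ)) N, gaussBinom (x ^ 2) (2 * N) (n + N).toNat * x ^ (n ^ 2) * y ^ n := by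
  have hbinom := prod_one_add_pow_mul_eq_sum (x ^ 2) (2 * N) (x ^ (1 - 2 * N : ℤ) * y)
  rw [prod_range_two_mul_one_add_sq_pow_mul hx hy] at hbinom
  refine mul_left_cancel₀ (by positivity : (x ^ N ^ 2)⁻¹ * y ^ N ≠ 0) (hbinom.trans ?_)
  rw [mul_sum]
  refine sum_nbij' (fun k => (k : ℤ) - N) (fun n => (n + N).toNat) ?_ ?_ ?_ ?_ ?_
  · intro k hk; simp only [mem_range, mem_Icc] at hk ⊢; omega
  · intro n hn; simp only [mem_range, mem_Icc] at hn ⊢; omega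
  · intro k hk; omega
  · intro n hn; simp only [mem_Icc] at hn; omega
  · intro k hk
    rw [mul_assoc, sq_pow_choose_two_mul_zpow_mul_pow hx hy,
      show ((k : ℤ) - N + N).toNat = k by omega]
    ring

end FiniteJacobi

lemma tprod_one_sub_pos {ι : Type*} {f : ι → ℝ} (hf : Summable f) (h1 : ∀ i, f i < 1) :
    0 < ∏' i, (1 - f i) := by
  have hlog : Summable fun i => Real.log (1 - f i) := by
    simpa [sub_eq_add_neg] using Real.summable_log_one_add_of_summable hf.neg
  rw [← Real.rexp_tsum_eq_tprod (fun i => sub_pos.2 (h1 i)) hlog]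
  exact Real.exp_pos _

lemma multipliable_one_sub {ι : Type*} {f : ι → ℝ} (hf : Summable f) :
    Multipliable fun i => 1 - f i := by
  simpa [sub_eq_add_neg] using Real.multipliable_one_add_of_summable hf.neg

section Geometric

variable {q : ℝ} (hq0 : 0 ≤ q) (hq1 : q < 1)
include hq0 hq1

lemma summable_pow_mul_add {m : ℕ} (hm : m ≠ 0) (a : ℕ) : Summable fun j : ℕ => q ^ (m * j + a) :=
  ((summable_geometric_of_lt_one (pow_nonneg hq0 m) (pow_lt_one₀ hq0 hq1 hm)).mul_left
    (q ^ a)).congr fun j => by ring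

lemma tprod_one_sub_pow_mul_add_pos {m a : ℕ} (hm : m ≠ 0) (ha : a ≠ 0) :
    0 < ∏' j : ℕ, (1 - q ^ (m * j + a)) :=
  tprod_one_sub_pos (summable_pow_mul_add hq0 hq1 hm a) fun _ => pow_lt_one₀ hq0 hq1 (by omega)

lemma tprod_one_sub_pow_succ_pos : 0 < ∏' j : ℕ, (1 - q ^ (j + 1)) := by
  simpa using tprod_one_sub_pow_mul_add_pos hq0 hq1 one_ne_zero one_ne_zero

lemma tendsto_qPochhammer : Tendsto (qPochhammer q) atTop (𝓝 (∏' j : ℕ, (1 - q ^ (j + 1)))) :=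
  HasProd.tendsto_prod_nat <|
    (multipliable_one_sub (by simpa using summable_pow_mul_add hq0 hq1 one_ne_zero 1)).hasProd

omit hq1 in
lemma gaussBinom_nonneg (m k : ℕ) : 0 ≤ gaussBinom q m k := by
  induction m generalizing k with
  | zero => cases k <;> simp [gaussBinom]
  | succ m ih =>
    cases k with
    | zero => simp
    | succ k =>
      have := ih k
      have := ih (k + 1)
      rw [gaussBinom_succ_succ]
      positivity

lemma qPochhammer_pos (k : ℕ) : 0 < qPochhammer q k :=
  prod_pos fun j _ => sub_pos.2 (pow_lt_one₀ hq0 hq1 j.succ_ne_zero)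

lemma qPochhammer_antitone : Antitone (qPochhammer q) :=
  antitone_nat_of_succ_le fun k => by
    rw [qPochhammer, prod_range_succ]
    exact mul_le_of_le_one_right (qPochhammer_pos hq0 hq1 k).le
      (sub_le_self _ (by positivity))

lemma tprod_le_qPochhammer (k : ℕ) : ∏' j : ℕ, (1 - q ^ (j + 1)) ≤ qPochhammer q k :=
  (qPochhammer_antitone hq0 hq1).le_of_tendsto (tendsto_qPochhammer hq0 hq1) k

lemma gaussBinom_le_inv_tprod (m k : ℕ) :
    gaussBinom q m k ≤ (∏' j : ℕ, (1 - q ^ (j + 1)))⁻¹ := by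
  rcases lt_or_ge m k with h | h
  · rw [gaussBinom_eq_zero_of_lt q h]
    exact (inv_pos.2 (tprod_one_sub_pow_succ_pos hq0 hq1)).le
  have hk := qPochhammer_pos hq0 hq1 k
  have hmk := qPochhammer_pos hq0 hq1 (m - k)
  calc gaussBinom q m k = qPochhammer q m / (qPochhammer q k * qPochhammer q (m - k)) := by
        rw [← gaussBinom_mul_qPochhammer_mul q h]
        field_simp
    _ ≤ (qPochhammer q k)⁻¹ := by
        rw [div_le_iff₀ (by positivity), inv_mul_eq_div, mul_div_cancel_left₀ _ hk.ne']
        exact qPochhammer_antitone hq0 hq1 (Nat.sub_le m k)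
    _ ≤ _ := inv_anti₀ (tprod_one_sub_pow_succ_pos hq0 hq1) (tprod_le_qPochhammer hq0 hq1 k)

lemma tendsto_gaussBinom {ι : Type*} {l : Filter ι} {a b : ι → ℕ} (ha : Tendsto a l atTop)
    (hb : Tendsto b l atTop) :
    Tendsto (fun i => gaussBinom q (a i + b i) (a i)) l (𝓝 (∏' j : ℕ, (1 - q ^ (j + 1)))⁻¹) := by
  set P := ∏' j : ℕ, (1 - q ^ (j + 1))
  have hP : 0 < P := tprod_one_sub_pow_succ_pos hq0 hq1
  have hlim := tendsto_qPochhammer hq0 hq1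
  have h := (hlim.comp (tendsto_atTop_mono (fun i => Nat.le_add_right (a i) (b i)) ha)).div
    ((hlim.comp ha).mul (hlim.comp hb)) (by positivity)
  rw [show P / (P * P) = P⁻¹ by field_simp] at h
  refine h.congr fun i => ?_
  have hpos := mul_pos (qPochhammer_pos hq0 hq1 (a i)) (qPochhammer_pos hq0 hq1 (b i))
  simp only [Pi.div_apply, Function.comp_apply]
  rw [div_eq_iff hpos.ne', ← mul_assoc,
    ← gaussBinom_mul_qPochhammer_mul q (Nat.le_add_right (a i) (b i)), Nat.add_sub_cancel_left]

lemma summable_pow_sq_mul_pow (c : ℝ) : Summable fun n : ℕ => q ^ (n ^ 2) * c ^ n := by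
  have hlim : Tendsto (fun n : ℕ => q ^ n * c) atTop (𝓝 0) := by
    simpa using (tendsto_pow_atTop_nhds_zero_of_lt_one hq0 hq1).mul_const c
  refine .of_norm_bounded_eventually_nat summable_geometric_two ?_
  filter_upwards [hlim.norm.eventually (ge_mem_nhds (by norm_num : ‖(0 : ℝ)‖ < 1 / 2))] with n hn
  rw [sq, pow_mul, ← mul_pow, norm_pow]
  exact pow_le_pow_left₀ (norm_nonneg _) hn n

lemma summable_zpow_sq_mul_zpow (c : ℝ) : Summable fun n : ℤ => q ^ (n ^ 2) * c ^ n := by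
  refine .of_nat_of_neg ?_ ?_
  · simpa [← zpow_natCast] using summable_pow_sq_mul_pow hq0 hq1 c
  · simpa [← zpow_natCast] using summable_pow_sq_mul_pow hq0 hq1 c⁻¹

lemma multipliable_one_add_pow_two_mul_add_one_mul (c : ℝ) :
    Multipliable fun j : ℕ => 1 + q ^ (2 * j + 1) * c :=
  Real.multipliable_one_add_of_summable ((summable_pow_mul_add hq0 hq1 two_ne_zero 1).mul_right c)

end Geometric

noncomputable def jacobiCoeff (x y : ℝ) (N : ℕ) (n : ℤ) : ℝ :=
  if n ∈ Icc (-(N : ℤ)) N then gaussBinom (x ^ 2) (2 * N) (n + N).toNat * x ^ (n ^ 2) * y ^ n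
  else 0

lemma tsum_jacobiCoeff {x y : ℝ} (hx : x ≠ 0) (hy : y ≠ 0) (N : ℕ) :
    ∑' n, jacobiCoeff x y N n =
      ∏ j ∈ range N, ((1 + x ^ (2 * j + 1) * y) * (1 + x ^ (2 * j + 1) * y⁻¹)) := by
  rw [tsum_eq_sum (f := jacobiCoeff x y N) (s := Icc (-(N : ℤ)) N) fun n hn => if_neg hn,
    prod_range_jacobi_eq_sum_gaussBinom hx hy]
  exact sum_congr rfl fun n hn => if_pos hn

section JacobiCoeff

variable {x : ℝ} (hx0 : 0 ≤ x) (hx1 : x < 1) (y : ℝ)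
include hx0 hx1

lemma tendsto_jacobiCoeff (n : ℤ) :
    Tendsto (fun N => jacobiCoeff x y N n) atTop
      (𝓝 ((∏' j : ℕ, (1 - (x ^ 2) ^ (j + 1)))⁻¹ * (x ^ (n ^ 2) * y ^ n))) := by
  have ha : Tendsto (fun N : ℕ => (n + N).toNat) atTop atTop :=
    tendsto_atTop_atTop.2 fun b => ⟨b + n.natAbs, fun N hN => by omega⟩
  have hb : Tendsto (fun N : ℕ => ((N : ℤ) - n).toNat) atTop atTop :=
    tendsto_atTop_atTop.2 fun b => ⟨b + n.natAbs, fun N hN => by omega⟩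
  refine ((tendsto_gaussBinom (sq_nonneg x) (pow_lt_one₀ hx0 hx1 two_ne_zero) ha hb).mul_const
    _).congr' ?_
  filter_upwards [eventually_ge_atTop n.natAbs] with N hN
  simp only [jacobiCoeff, if_pos (mem_Icc.2 (⟨by omega, by omega⟩ : -(N : ℤ) ≤ n ∧ n ≤ N)),
    show (n + N).toNat + ((N : ℤ) - n).toNat = 2 * N by omega, mul_assoc]

lemma norm_jacobiCoeff_le (N : ℕ) (n : ℤ) :
    ‖jacobiCoeff x y N n‖ ≤ (∏' j : ℕ, (1 - (x ^ 2) ^ (j + 1)))⁻¹ * (x ^ (n ^ 2) * |y| ^ n) := by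
  have ht1 := pow_lt_one₀ hx0 hx1 two_ne_zero
  have := tprod_one_sub_pow_succ_pos (sq_nonneg x) ht1
  rw [jacobiCoeff]
  split_ifs
  · rw [norm_mul, norm_mul, Real.norm_of_nonneg (gaussBinom_nonneg (sq_nonneg x) _ _), norm_zpow,
      norm_zpow, Real.norm_of_nonneg hx0, Real.norm_eq_abs, mul_assoc]
    exact mul_le_mul_of_nonneg_right (gaussBinom_le_inv_tprod (sq_nonneg x) ht1 _ _)
      (by positivity)
  · rw [norm_zero]
    positivity

end JacobiCoeff

theorem jacobi_triple_product {x y : ℝ} (hx0 : 0 < x) (hx1 : x < 1) (hy : y ≠ 0) :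
    ∑' n : ℤ, x ^ (n ^ 2) * y ^ n =
      (∏' j : ℕ, (1 - x ^ (2 * j + 2))) * (∏' j : ℕ, (1 + x ^ (2 * j + 1) * y)) *
        ∏' j : ℕ, (1 + x ^ (2 * j + 1) * y⁻¹) := by
  have hP := tprod_one_sub_pow_succ_pos (sq_nonneg x) (pow_lt_one₀ hx0.le hx1 two_ne_zero)
  have hmul₁ := multipliable_one_add_pow_two_mul_add_one_mul hx0.le hx1 y
  have hmul₂ := multipliable_one_add_pow_two_mul_add_one_mul hx0.le hx1 y⁻¹
  have hprod := tendsto_nhds_unique (hmul₁.mul hmul₂).hasProd.tendsto_prod_nat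
    ((tendsto_tsum_of_dominated_convergence
      ((summable_zpow_sq_mul_zpow hx0.le hx1 |y|).mul_left _) (tendsto_jacobiCoeff hx0.le hx1 y)
      (.of_forall (norm_jacobiCoeff_le hx0.le hx1 y))).congr (tsum_jacobiCoeff hx0.ne' hy))
  have hPx : ∏' j : ℕ, (1 - x ^ (2 * j + 2)) = ∏' j : ℕ, (1 - (x ^ 2) ^ (j + 1)) :=
    tprod_congr fun j => by ring
  rw [hPx, mul_assoc, ← hmul₁.tprod_mul hmul₂, hprod, tsum_mul_left]
  field_simp

lemma tsum_neg_one_zpow_mul_rpow_eq_tprod {q : ℝ} (hq0 : 0 < q) (hq1 : q < 1) {a b : ℕ} {c : ℝ}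
    (ha : (a : ℝ) = (5 - c) / 2) (hb : (b : ℝ) = (5 + c) / 2) :
    ∑' n : ℤ, (-1 : ℝ) ^ n * q ^ ((5 * (n : ℝ) ^ 2 + c * n) / 2) =
      (∏' j : ℕ, (1 - q ^ (5 * j + 5))) * (∏' j : ℕ, (1 - q ^ (5 * j + b))) *
        ∏' j : ℕ, (1 - q ^ (5 * j + a)) := by
  have hx0 : 0 < q ^ (5 / 2 : ℝ) := Real.rpow_pos_of_pos hq0 _
  have hx1 : q ^ (5 / 2 : ℝ) < 1 := Real.rpow_lt_one hq0.le hq1 (by norm_num)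
  have hy : -q ^ (c / 2) ≠ 0 := neg_ne_zero.2 (Real.rpow_pos_of_pos hq0 _).ne'
  have hterm (n : ℤ) : (-1 : ℝ) ^ n * q ^ ((5 * (n : ℝ) ^ 2 + c * n) / 2) =
      (q ^ (5 / 2 : ℝ)) ^ (n ^ 2) * (-q ^ (c / 2)) ^ n := by
    rw [neg_eq_neg_one_mul (q ^ (c / 2)), mul_zpow, ← Real.rpow_mul_intCast hq0.le,
      ← Real.rpow_mul_intCast hq0.le, mul_left_comm, ← Real.rpow_add hq0]
    push_cast
    ring_nf
  have hfive (j : ℕ) : 1 - q ^ (5 * j + 5) = 1 - (q ^ (5 / 2 : ℝ)) ^ (2 * j + 2) := by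
    rw [← Real.rpow_mul_natCast hq0.le, ← Real.rpow_natCast]
    push_cast
    ring_nf
  have hplus (j : ℕ) :
      1 - q ^ (5 * j + b) = 1 + (q ^ (5 / 2 : ℝ)) ^ (2 * j + 1) * -q ^ (c / 2) := by
    rw [← Real.rpow_mul_natCast hq0.le, mul_neg, ← Real.rpow_add hq0, ← Real.rpow_natCast]
    push_cast
    rw [hb]
    ring_nf
  have hminus (j : ℕ) :
      1 - q ^ (5 * j + a) = 1 + (q ^ (5 / 2 : ℝ)) ^ (2 * j + 1) * (-q ^ (c / 2))⁻¹ := by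
    rw [← Real.rpow_mul_natCast hq0.le, inv_neg, ← Real.rpow_neg hq0.le, mul_neg,
      ← Real.rpow_add hq0, ← Real.rpow_natCast]
    push_cast
    rw [ha]
    ring_nf
  rw [tsum_congr hterm, tprod_congr hfive, tprod_congr hplus, tprod_congr hminus]
  exact jacobi_triple_product hx0 hx1 hy

lemma hasProd_ite_mod_eq_iff {α : Type*} [CommMonoid α] [TopologicalSpace α] {m r : ℕ}
    (hr : r < m) {f : ℕ → α} {a : α} :
    HasProd (fun n => if n % m = r then f n else 1) a ↔ HasProd (fun j => f (m * j + r)) a := by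
  have hinj : Function.Injective fun j => m * j + r := fun i j h => by
    simpa [(Nat.zero_le r).trans_lt hr |>.ne'] using h
  rw [← hinj.hasProd_iff fun n hn =>
    if_neg fun (h : n % m = r) => hn ⟨n / m, h ▸ Nat.div_add_mod n m⟩]
  simp only [Function.comp_def, Nat.mul_add_mod, Nat.mod_eq_of_lt hr, if_true]

lemma tprod_one_sub_pow_rpow_chi5 {q : ℝ} (hq0 : 0 < q) (hq1 : q < 1) :
    ∏' n : ℕ, (1 - q ^ (n + 1)) ^ chi5 (n + 1) =
      (∏' j : ℕ, (1 - q ^ (5 * j + 1))) * (∏' j : ℕ, (1 - q ^ (5 * j + 4))) /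
        ((∏' j : ℕ, (1 - q ^ (5 * j + 2))) * ∏' j : ℕ, (1 - q ^ (5 * j + 3))) := by
  have hprod (a : ℕ) :
      HasProd (fun j : ℕ => 1 - q ^ (5 * j + a)) (∏' j : ℕ, (1 - q ^ (5 * j + a))) :=
    (multipliable_one_sub (summable_pow_mul_add hq0.le hq1 (by norm_num) a)).hasProd
  have hinv (a : ℕ) (ha : a ≠ 0) := (hprod a).inv₀
    (tprod_one_sub_pow_mul_add_pos hq0.le hq1 (by norm_num) ha).ne'
  have h1 := (hasProd_ite_mod_eq_iff (f := fun n => 1 - q ^ (n + 1)) (by norm_num : 0 < 5)).2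
    (by simpa using hprod 1)
  have h2 := (hasProd_ite_mod_eq_iff (f := fun n => (1 - q ^ (n + 1))⁻¹) (by norm_num : 1 < 5)).2
    (by simpa using hinv 2 (by norm_num))
  have h3 := (hasProd_ite_mod_eq_iff (f := fun n => (1 - q ^ (n + 1))⁻¹) (by norm_num : 2 < 5)).2
    (by simpa using hinv 3 (by norm_num))
  have h4 := (hasProd_ite_mod_eq_iff (f := fun n => 1 - q ^ (n + 1)) (by norm_num : 3 < 5)).2
    (by simpa using hprod 4)
  refine (tprod_congr fun n => ?_).trans ((((h1.mul h2).mul h3).mul h4).tprod_eq.trans (by ring))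
  have : n % 5 < 5 := Nat.mod_lt _ (by norm_num)
  interval_cases h : n % 5 <;> simp [chi5, Nat.add_mod, h, Real.rpow_neg_one]

/-- For `0 < q < 1`,
`∏_{n ≥ 1} (1 - q^n)^{χ₅(n)}
  = (∑_{n ∈ ℤ} (-1)^n q^{(5n²+3n)/2}) / (∑_{n ∈ ℤ} (-1)^n q^{(5n²+n)/2})`,
the denominator being nonzero (real powers of `q`, real-power exponents on
positive bases on the left). -/
theorem stmt13 (q : ℝ) (hq0 : 0 < q) (hq1 : q < 1) :
    (∑' n : ℤ, (-1 : ℝ) ^ n * q ^ ((5 * (n : ℝ) ^ 2 + (n : ℝ)) / 2)) ≠ 0 ∧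
    ∏' n : ℕ, (1 - q ^ (n + 1)) ^ (chi5 (n + 1)) =
      (∑' n : ℤ, (-1 : ℝ) ^ n * q ^ ((5 * (n : ℝ) ^ 2 + 3 * (n : ℝ)) / 2)) /
        (∑' n : ℤ, (-1 : ℝ) ^ n * q ^ ((5 * (n : ℝ) ^ 2 + (n : ℝ)) / 2)) := by
  have hnum := tsum_neg_one_zpow_mul_rpow_eq_tprod hq0 hq1 (a := 1) (b := 4) (c := 3)
    (by norm_num) (by norm_num)
  have hden := tsum_neg_one_zpow_mul_rpow_eq_tprod hq0 hq1 (a := 2) (b := 3) (c := 1)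
    (by norm_num) (by norm_num)
  simp only [one_mul] at hden
  have hpos (a : ℕ) (ha : a ≠ 0) :=
    tprod_one_sub_pow_mul_add_pos hq0.le hq1 (m := 5) (by norm_num) ha
  have := hpos 2 (by norm_num)
  have := hpos 3 (by norm_num)
  have := hpos 5 (by norm_num)
  rw [hden, hnum, tprod_one_sub_pow_rpow_chi5 hq0 hq1]
  refine ⟨by positivity, ?_⟩
  field_simp
end
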